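/- arXiv:2208.11325 — 7 statements merged into one kernel-verified Lean document; each statement's English description precedes it below -/
import Mathlib

section
/- Let N be a finite set of agents with monotone valuations v_i : 2^M → ℝ≥0, let (𝒳, μ) be an allocation with bundle family 𝒳 = (X_i)_{i∈N}, and let (G, w) = G(𝒳, μ) be its assign-envy graph. If C is a directed cycle in the auxiliary graph G_μ (where the perfect matching μ's edges are reversed), then its auxiliary weight is negative: w_μ(C) < 0. -/
/-!  Common setup for fair division: agents `N`, items `I`, monotone valuations
`v : N → Finset I → ℝ`, allocations `(𝒳, μ)` given by a bundle family `X : N → Finset I`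
and a bijection `σ : Equiv.Perm N` on indices (agent `i` receives bundle `X (σ i)`),
the assign-envy graph, and its auxiliary directed graph. -/

variable {N I : Type*}

/-- Weight of a walk in a directed graph, given by its list of vertices. -/
def walkWeight {V : Type*} (W : V → V → ℝ) (l : List V) : ℝ :=
  ((l.zip l.tail).map fun p => W p.1 p.2).sum

/-- A (simple) directed cycle, given by the list of its vertices (the closing edge
from the last vertex back to the first is implicit). -/
def IsDiCycle {V : Type*} (adj : V → V → Prop) (l : List V) : Prop :=
  l ≠ [] ∧ l.Nodup ∧ (l ++ l.take 1).Chain' adj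

/-- Total weight of a directed cycle (including the closing edge). -/
def cycleWeight {V : Type*} (W : V → V → ℝ) (l : List V) : ℝ :=
  walkWeight W (l ++ l.take 1)

/-- Adjacency (on indices) of the assign-envy graph `G(𝒳, μ)` of the allocation `(X, σ)`:
agent `i` is joined to its own bundle `X (σ i)` and to every bundle it envies. -/
def aeAdj (v : N → Finset I → ℝ) (X : N → Finset I) (σ : Equiv.Perm N) (i j : N) : Prop :=
  j = σ i ∨ v i (X (σ i)) < v i (X j)

/-- Edge weights of the assign-envy graph: `w(i, X_j) = −v_i(X_j)`. -/
def aeW (v : N → Finset I → ℝ) (X : N → Finset I) (i j : N) : ℝ := - v i (X j)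

/-- Auxiliary directed graph of a bipartite graph on `N ⊕ N` (agents on the left, bundle
indices on the right) with respect to the perfect matching given by a permutation `τ`:
non-matching edges go left-to-right, matching edges are reversed. -/
def aeAux (adj : N → N → Prop) (τ : Equiv.Perm N) : N ⊕ N → N ⊕ N → Prop
  | Sum.inl i, Sum.inr j => adj i j ∧ j ≠ τ i
  | Sum.inr j, Sum.inl i => j = τ i
  | _, _ => False

/-- Auxiliary weights on the auxiliary directed graph: forward edges keep their weight,
reversed matching edges get the negated weight. -/
def aeAuxW (W : N → N → ℝ) : N ⊕ N → N ⊕ N → ℝ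
  | Sum.inl i, Sum.inr j => W i j
  | Sum.inr j, Sum.inl i => - W i j
  | _, _ => 0

/-- EF1 (envy-freeness up to one item) for a family of assigned bundles `Y : N → Finset I`. -/
def EF1 [DecidableEq I] (v : N → Finset I → ℝ) (Y : N → Finset I) : Prop :=
  ∀ i j : N, v i (Y i) ≥ v i (Y j) ∨ ∃ k ∈ Y j, v i (Y i) ≥ v i ((Y j).erase k)

/-! Take the potential `φ` that is `v_i(μ(i))` on agent `i` and `0` on every bundle. A forward edge
`i → X_j` has weight `-v_i(X_j) < φ(X_j) - φ(i)` because `i` envies `X_j`, and a reversed matching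
edge `μ(i) → i` has weight exactly `φ(i) - φ(μ(i))`. Summing around a cycle, which alternates
between bundles and agents and so visits an agent, the potential telescopes away and the weight
is negative. -/

section Potential

variable {V : Type*} {adj : V → V → Prop} {W : V → V → ℝ} (φ : V → ℝ)

theorem walkWeight_cons_cons (a b : V) (l : List V) :
    walkWeight W (a :: b :: l) = W a b + walkWeight W (b :: l) := by
  simp [walkWeight]

theorem walkWeight_le_of_isChain (hle : ∀ a b, adj a b → W a b ≤ φ b - φ a) :
    ∀ (a : V) (l : List V), (a :: l).IsChain adj →
      walkWeight W (a :: l) ≤ φ ((a :: l).getLast (List.cons_ne_nil a l)) - φ a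
  | a, [], _ => by simp [walkWeight]
  | a, b :: l, hl => by
    rw [List.isChain_cons_cons] at hl
    have := walkWeight_le_of_isChain hle b l hl.2
    rw [walkWeight_cons_cons, List.getLast_cons (List.cons_ne_nil b l)]
    linarith [hle a b hl.1]

theorem walkWeight_lt_of_isChain (hle : ∀ a b, adj a b → W a b ≤ φ b - φ a) {c : V}
    (hc : ∀ b, adj c b → W c b < φ b - φ c) :
    ∀ (a : V) (l : List V), (a :: l).IsChain adj → c ∈ (a :: l).dropLast →
      walkWeight W (a :: l) < φ ((a :: l).getLast (List.cons_ne_nil a l)) - φ a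
  | a, [], _, hmem => by simp at hmem
  | a, b :: l, hl, hmem => by
    rw [List.isChain_cons_cons] at hl
    rw [walkWeight_cons_cons, List.getLast_cons (List.cons_ne_nil b l)]
    rcases List.mem_cons.mp hmem with rfl | hmem
    · linarith [hc b hl.1, walkWeight_le_of_isChain φ hle b l hl.2]
    · linarith [hle a b hl.1, walkWeight_lt_of_isChain hle hc b l hl.2 hmem]

theorem exists_mem_adj_of_isChain_closed {l : List V} (hl : (l ++ l.take 1).IsChain adj)
    {x : V} (hx : x ∈ l) : ∃ y ∈ l, adj x y := by
  obtain ⟨s, r, rfl⟩ := List.mem_iff_append.mp hx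
  cases r with
  | cons y r =>
    refine ⟨y, by simp, ?_⟩
    simpa using hl.infix (l₁ := [x, y]) ⟨s, r ++ (s ++ x :: y :: r).take 1, by simp⟩
  | nil =>
    obtain ⟨z, hz⟩ : ∃ z, (s ++ [x]).take 1 = [z] := by
      cases s with
      | nil => exact ⟨x, rfl⟩
      | cons a s => exact ⟨a, rfl⟩
    refine ⟨z, List.mem_of_mem_take (hz ▸ List.mem_singleton_self z), ?_⟩
    simpa using hl.infix (l₁ := [x, z]) ⟨s, [], by simp [hz]⟩

theorem cycleWeight_neg_of_potential (hle : ∀ a b, adj a b → W a b ≤ φ b - φ a) {l : List V}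
    (hl : (l ++ l.take 1).IsChain adj) {c : V} (hcl : c ∈ l)
    (hc : ∀ b, adj c b → W c b < φ b - φ c) : cycleWeight W l < 0 := by
  obtain ⟨x, t, rfl⟩ := List.exists_cons_of_ne_nil (List.ne_nil_of_mem hcl)
  have hunfold : x :: t ++ (x :: t).take 1 = x :: (t ++ [x]) := by simp
  rw [hunfold] at hl
  have := walkWeight_lt_of_isChain φ hle hc x (t ++ [x]) hl
    (by rwa [List.dropLast_cons_of_ne_nil (by simp), List.dropLast_concat])
  simp only [List.getLast_cons (by simp : t ++ [x] ≠ []), List.getLast_append_singleton,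
    sub_self] at this
  rwa [cycleWeight, hunfold]

end Potential

section AssignEnvy

variable (v : N → Finset I → ℝ) (X : N → Finset I) (σ : Equiv.Perm N)

def aePotential : N ⊕ N → ℝ := Sum.elim (fun i => v i (X (σ i))) 0

variable {v X σ}

theorem aeAuxW_lt_aePotential_of_inl {i : N} {b : N ⊕ N}
    (h : aeAux (aeAdj v X σ) σ (Sum.inl i) b) :
    aeAuxW (aeW v X) (Sum.inl i) b < aePotential v X σ b - aePotential v X σ (Sum.inl i) := by
  rcases b with _ | j
  · exact h.elim
  · obtain ⟨hadj, hne⟩ := h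
    have henvy : v i (X (σ i)) < v i (X j) := hadj.resolve_left hne
    simp only [aeAuxW, aeW, aePotential, Sum.elim_inl, Sum.elim_inr, Pi.zero_apply]
    linarith

theorem aeAuxW_le_aePotential {a b : N ⊕ N} (h : aeAux (aeAdj v X σ) σ a b) :
    aeAuxW (aeW v X) a b ≤ aePotential v X σ b - aePotential v X σ a := by
  rcases a with i | j
  · exact (aeAuxW_lt_aePotential_of_inl h).le
  · rcases b with i | _
    · obtain rfl : j = σ i := h
      simp [aeAuxW, aeW, aePotential]
    · exact h.elim

end AssignEnvy

theorem assign_envy_cycle_negative_general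
    (v : N → Finset I → ℝ) (X : N → Finset I) (σ : Equiv.Perm N) (C : List (N ⊕ N))
    (hC : IsDiCycle (aeAux (aeAdj v X σ) σ) C) :
    cycleWeight (aeAuxW (aeW v X)) C < 0 := by
  obtain ⟨hne, -, hclosed⟩ := hC
  obtain ⟨x, hx⟩ := List.exists_mem_of_ne_nil C hne
  obtain ⟨i, hi⟩ : ∃ i, Sum.inl i ∈ C := by
    rcases x with i | _
    · exact ⟨i, hx⟩
    · obtain ⟨y, hy, hadj⟩ := exists_mem_adj_of_isChain_closed hclosed hx
      rcases y with i | _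
      · exact ⟨i, hy⟩
      · exact hadj.elim
  exact cycleWeight_neg_of_potential (aePotential v X σ) (fun _ _ => aeAuxW_le_aePotential)
    hclosed hi (fun _ => aeAuxW_lt_aePotential_of_inl)

/-- Any directed cycle of the auxiliary graph `G_μ` of the assign-envy graph
`G(𝒳, μ)` of an allocation `(X, σ)` has negative auxiliary weight. -/
theorem assign_envy_cycle_negative
    [Fintype N] [Fintype I] [DecidableEq I]
    (v : N → Finset I → ℝ) (X : N → Finset I) (σ : Equiv.Perm N) (C : List (N ⊕ N))
    (hmono : ∀ i : N, ∀ A B : Finset I, A ⊆ B → v i A ≤ v i B)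
    (hnonneg : ∀ (i : N) (A : Finset I), 0 ≤ v i A)
    (hdisj : ∀ i j : N, i ≠ j → Disjoint (X i) (X j))
    (hC : IsDiCycle (aeAux (aeAdj v X σ) σ) C) :
    cycleWeight (aeAuxW (aeW v X)) C < 0 :=
  assign_envy_cycle_negative_general v X σ C hC
end

section
/- Let (𝒳, μ) be an allocation with assign-envy graph (G, w) = G(𝒳, μ), and let μ* be a minimum-weight perfect matching in (G, w). Let (G*, w*) = G(𝒳, μ*) be the assign-envy graph of the allocation (𝒳, μ*). Then the auxiliary directed graph G*_{μ*} contains no directed cycle. -/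
/-!  Common setup for fair division: agents `N`, items `I`, monotone valuations
`v : N → Finset I → ℝ`, allocations `(𝒳, μ)` given by a bundle family `X : N → Finset I`
and a bijection `σ : Equiv.Perm N` on indices (agent `i` receives bundle `X (σ i)`),
the assign-envy graph, and its auxiliary directed graph. -/

variable {N I : Type*}

/-! A directed cycle of the auxiliary graph alternates between agents and bundles: each agent on
it points to a bundle it envies under `μ*`, and that bundle points back to its owner. Moving every
agent on the cycle to the bundle it points to gives a new perfect matching. Since each agent values
its new bundle more than its bundle under `μ*`, hence more than its own bundle under `μ`, the new
matching is still a perfect matching of `G(𝒳, μ)`, and its weight is strictly smaller than that of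
`μ*`, contradicting minimality. -/

open Equiv

theorem List.rel_formPerm_of_cycleChain {α : Type*} [DecidableEq α] {r : α → α → Prop}
    {l : List α} (hl : l.Nodup) (hc : Cycle.Chain r (l : Cycle α)) :
    ∀ x ∈ l, r x (l.formPerm x) := by
  intro x hx
  obtain ⟨s, t, rfl⟩ := List.append_of_mem hx
  have hrot : s ++ x :: t ~r x :: (t ++ s) := by
    simpa using List.isRotated_append (l := s) (l' := x :: t)
  rw [List.formPerm_eq_of_isRotated hl hrot]
  rw [Cycle.coe_eq_coe.mpr hrot, Cycle.chain_coe_cons] at hc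
  have hnd := hrot.nodup_iff.mp hl
  cases h : t ++ s with
  | nil => simpa [h] using hc
  | cons y m =>
    rw [h] at hc hnd
    rw [List.formPerm_apply_head x y m hnd]
    exact (List.isChain_cons_cons.mp hc).1

theorem IsDiCycle.cycleChain {V : Type*} {adj : V → V → Prop} {l : List V}
    (h : IsDiCycle adj l) : Cycle.Chain adj (l : Cycle V) := by
  obtain ⟨hne, -, hc⟩ := h
  obtain ⟨a, l, rfl⟩ := List.exists_cons_of_ne_nil hne
  exact hc

theorem Equiv.Perm.exists_perm_apply_inl {α β : Type*} [Finite α] (p : Perm (α ⊕ β))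
    (hp : ∀ a, (p (.inl a)).isLeft) : ∃ q : Perm α, ∀ a, p (.inl a) = .inl (q a) := by
  choose f hf using fun a => Sum.isLeft_iff.mp (hp a)
  have hinj : Function.Injective f := fun a b hab =>
    Sum.inl_injective (p.injective (by rw [hf, hf, hab]))
  exact ⟨Equiv.ofBijective f (Finite.injective_iff_bijective.mp hinj), hf⟩

section AuxiliaryGraph

variable {adj : N → N → Prop} {τ : Perm N}

theorem aeAux_irrefl (x : N ⊕ N) : ¬ aeAux adj τ x x := by
  rcases x with i | j <;> simp [aeAux]

theorem aeAux_inr_iff {j : N} {y : N ⊕ N} : aeAux adj τ (.inr j) y ↔ ∃ k, y = .inl k ∧ j = τ k := by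
  rcases y with k | k <;> simp [aeAux]

theorem aeAux_inl_iff {i : N} {y : N ⊕ N} :
    aeAux adj τ (.inl i) y ↔ ∃ j, y = .inr j ∧ adj i j ∧ j ≠ τ i := by
  rcases y with k | k <;> simp [aeAux]

theorem aeAux_two_steps {p : Perm (N ⊕ N)} (hp : ∀ x, p x = x ∨ aeAux adj τ x (p x)) (i : N) :
    p (.inl i) = .inl i ∨
      ∃ k, p (.inl i) = .inr (τ k) ∧ p (.inr (τ k)) = .inl k ∧ adj i (τ k) ∧ τ k ≠ τ i := by
  refine (hp (.inl i)).imp_right fun hi => ?_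
  obtain ⟨j, hj, hadj, hne⟩ := aeAux_inl_iff.mp hi
  rcases hp (.inr j) with hfix | hj'
  · exact absurd (p.injective (hfix.trans hj.symm)) Sum.inr_ne_inl
  · obtain ⟨k, hk, rfl⟩ := aeAux_inr_iff.mp hj'
    exact ⟨k, hj, hk, hadj, hne⟩

theorem exists_perm_ne_of_aeAux [Finite N] {p : Perm (N ⊕ N)}
    (hp : ∀ x, p x = x ∨ aeAux adj τ x (p x)) (hp1 : p ≠ 1) :
    ∃ ρ : Perm N, (∀ i, ρ i = τ i ∨ adj i (ρ i) ∧ ρ i ≠ τ i) ∧ ρ ≠ τ := by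
  -- `p ∘ p` sends each agent to an agent, so it restricts to a permutation `q` of the agents.
  obtain ⟨q, hq⟩ : ∃ q : Perm N, ∀ i, p (p (.inl i)) = .inl (q i) := by
    refine Perm.exists_perm_apply_inl (p * p) fun i => ?_
    rcases aeAux_two_steps hp i with hfix | ⟨k, hk, hk', -⟩
    · simp [hfix]
    · simp [hk, hk']
  have step (i : N) : p (.inl i) = .inl i ∧ q i = i ∨ adj i (τ (q i)) ∧ τ (q i) ≠ τ i := by
    rcases aeAux_two_steps hp i with hfix | ⟨k, hk, hk', hadj, hne⟩
    · refine .inl ⟨hfix, Sum.inl_injective (β := N) ?_⟩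
      rw [← hq, hfix, hfix]
    · obtain rfl : q i = k := Sum.inl_injective (β := N) (by rw [← hq, hk, hk'])
      exact .inr ⟨hadj, hne⟩
  refine ⟨τ * q, fun i => (step i).imp (fun h => by simp [h.2]) id, fun hρ => hp1 ?_⟩
  have hq1 : ∀ i, q i = i := fun i => by simpa using congrFun (congrArg DFunLike.coe hρ) i
  have hinl (i : N) : p (.inl i) = .inl i := by
    rcases step i with h | h
    · exact h.1
    · exact absurd (by rw [hq1]) h.2
  ext x
  rcases x with i | j
  · simp [hinl]
  · rcases hp (.inr j) with h | h
    · simp [h]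
    · obtain ⟨k, hk, -⟩ := aeAux_inr_iff.mp h
      exact absurd (p.injective (hk.trans (hinl k).symm)) Sum.inr_ne_inl

end AuxiliaryGraph

section Envy

variable {v : N → Finset I → ℝ} {X : N → Finset I}

theorem aeAdj_of_lt {σ : Perm N} {i k j : N} (hk : aeAdj v X σ i k)
    (hlt : v i (X k) < v i (X j)) : aeAdj v X σ i j := by
  rcases hk with rfl | hk
  · exact .inr hlt
  · exact .inr (hk.trans hlt)

theorem sum_aeW_lt_of_envy [Fintype N] {τ ρ : Perm N}
    (h : ∀ i, ρ i = τ i ∨ v i (X (τ i)) < v i (X (ρ i))) (hne : ρ ≠ τ) :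
    ∑ i, aeW v X i (ρ i) < ∑ i, aeW v X i (τ i) := by
  obtain ⟨i, hi⟩ := DFunLike.ne_iff.mp hne
  refine Finset.sum_lt_sum (fun j _ => ?_) ⟨i, Finset.mem_univ i, ?_⟩
  · rcases h j with hj | hj
    · rw [hj]
    · exact neg_le_neg hj.le
  · exact neg_lt_neg ((h i).resolve_left hi)

end Envy

theorem min_matching_assign_envy_acyclic_general
    [Fintype N]
    (v : N → Finset I → ℝ) (X : N → Finset I) (σ τ : Equiv.Perm N)
    (hτ : ∀ i : N, aeAdj v X σ i (τ i))
    (hτmin : ∀ ρ : Equiv.Perm N, (∀ i : N, aeAdj v X σ i (ρ i)) →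
      ∑ i : N, aeW v X i (τ i) ≤ ∑ i : N, aeW v X i (ρ i)) :
    ∀ C : List (N ⊕ N), ¬ IsDiCycle (aeAux (aeAdj v X τ) τ) C := by
  classical
  intro C hC
  have hcycle := List.rel_formPerm_of_cycleChain hC.2.1 hC.cycleChain
  have hstep (y : N ⊕ N) : C.formPerm y = y ∨ aeAux (aeAdj v X τ) τ y (C.formPerm y) :=
    (em (y ∈ C)).symm.imp List.formPerm_apply_of_notMem (hcycle y)
  obtain ⟨x, hx⟩ := List.exists_mem_of_ne_nil C hC.1
  have hmoved : C.formPerm ≠ 1 := fun h1 => aeAux_irrefl x (by simpa [h1] using hcycle x hx)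
  obtain ⟨ρ, hρ, hρτ⟩ := exists_perm_ne_of_aeAux hstep hmoved
  have henvy (i : N) : ρ i = τ i ∨ v i (X (τ i)) < v i (X (ρ i)) :=
    (hρ i).imp_right fun h => h.1.resolve_left h.2
  have hρσ (i : N) : aeAdj v X σ i (ρ i) := by
    rcases henvy i with h | h
    · exact h ▸ hτ i
    · exact aeAdj_of_lt (hτ i) h
  exact (hτmin ρ hρσ).not_gt (sum_aeW_lt_of_envy henvy hρτ)

/-- If `μ*` (here `τ`) is a minimum-weight perfect matching in the
assign-envy graph `G(𝒳, μ)` of an allocation `(X, σ)`, then the auxiliary directed graph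
`G*_{μ*}` of the assign-envy graph `G(𝒳, μ*)` with respect to `μ*` has no directed cycle. -/
theorem min_matching_assign_envy_acyclic
    [Fintype N] [Fintype I] [DecidableEq I]
    (v : N → Finset I → ℝ) (X : N → Finset I) (σ τ : Equiv.Perm N)
    (hmono : ∀ i : N, ∀ A B : Finset I, A ⊆ B → v i A ≤ v i B)
    (hnonneg : ∀ (i : N) (A : Finset I), 0 ≤ v i A)
    (hdisj : ∀ i j : N, i ≠ j → Disjoint (X i) (X j))
    (hτ : ∀ i : N, aeAdj v X σ i (τ i))
    (hτmin : ∀ ρ : Equiv.Perm N, (∀ i : N, aeAdj v X σ i (ρ i)) →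
      ∑ i : N, aeW v X i (τ i) ≤ ∑ i : N, aeW v X i (ρ i)) :
    ∀ C : List (N ⊕ N), ¬ IsDiCycle (aeAux (aeAdj v X τ) τ) C :=
  min_matching_assign_envy_acyclic_general v X σ τ hτ hτmin
end

section
/- Let (𝒳, μ) be an allocation with assign-envy graph (G, w) = G(𝒳, μ), and let μ* be a minimum-weight perfect matching in (G, w). Then v_i(μ*(i)) ≥ v_i(μ(i)) for every agent i ∈ N; consequently, if the allocation (𝒳, μ) is EF1, then the allocation (𝒳, μ*) is also EF1. -/
/-!  Common setup for fair division: agents `N`, items `I`, monotone valuations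
`v : N → Finset I → ℝ`, allocations `(𝒳, μ)` given by a bundle family `X : N → Finset I`
and a bijection `σ : Equiv.Perm N` on indices (agent `i` receives bundle `X (σ i)`),
the assign-envy graph, and its auxiliary directed graph. -/

variable {N I : Type*}

/-- If `μ*` (here `τ`) is a minimum-weight perfect matching in the
assign-envy graph of an allocation `(X, σ)`, then `v i (μ*(i)) ≥ v i (μ(i))` for every agent
`i`; consequently, if `(𝒳, μ)` is EF1 then `(𝒳, μ*)` is also EF1. -/
theorem min_matching_preserves_EF1
    [Fintype N] [Fintype I] [DecidableEq I]
    (v : N → Finset I → ℝ) (X : N → Finset I) (σ τ : Equiv.Perm N)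
    (hmono : ∀ i : N, ∀ A B : Finset I, A ⊆ B → v i A ≤ v i B)
    (hnonneg : ∀ (i : N) (A : Finset I), 0 ≤ v i A)
    (hdisj : ∀ i j : N, i ≠ j → Disjoint (X i) (X j))
    (hτ : ∀ i : N, aeAdj v X σ i (τ i))
    (hτmin : ∀ ρ : Equiv.Perm N, (∀ i : N, aeAdj v X σ i (ρ i)) →
      ∑ i : N, aeW v X i (τ i) ≤ ∑ i : N, aeW v X i (ρ i)) :
    (∀ i : N, v i (X (σ i)) ≤ v i (X (τ i))) ∧
      (EF1 v (fun i => X (σ i)) → EF1 v (fun i => X (τ i))) := by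
  have h1 : ∀ i : N, v i (X (σ i)) ≤ v i (X (τ i)) := by
    intro i
    rcases hτ i with h | h
    · rw [h]
    · exact le_of_lt h
  refine ⟨h1, fun hef i j => ?_⟩
  rcases hef i (σ.symm (τ j)) with h | ⟨k, hk, hle⟩
  · left
    simp only [Equiv.apply_symm_apply] at h
    exact le_trans h (h1 i)
  · right
    simp only [Equiv.apply_symm_apply] at hk hle
    exact ⟨k, hk, le_trans hle (h1 i)⟩
end

section
/- Let N be a finite set of agents with monotone valuations v_i : 2^M → ℝ≥0, and let (X_i)_{i∈N} be an EF1 allocation of a subset of the items M. Suppose agent i₀ is unenvied, i.e., v_j(X_j) ≥ v_j(X_{i₀}) for every agent j ∈ N, and let k ∈ M be an item not contained in any bundle X_j. Then the allocation obtained by replacing X_{i₀} with X_{i₀} ∪ {k} (keeping all other bundles unchanged) is again EF1. -/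
/-!  Common setup for fair division: agents `N`, items `I`, monotone valuations
`v : N → Finset I → ℝ`, allocations `(𝒳, μ)` given by a bundle family `X : N → Finset I`
and a bijection `σ : Equiv.Perm N` on indices (agent `i` receives bundle `X (σ i)`),
the assign-envy graph, and its auxiliary directed graph. -/

variable {N I : Type*}

/-- If `(X_i)` is an EF1 allocation with monotone valuations, agent `i₀` is
unenvied (`v j (X j) ≥ v j (X i₀)` for all `j`), and `k` is an item contained in no bundle,
then giving `k` to `i₀` keeps the allocation EF1. -/
theorem give_item_to_unenvied_preserves_EF1
    [Fintype N] [Fintype I] [DecidableEq I] [DecidableEq N]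
    (v : N → Finset I → ℝ) (X : N → Finset I) (i₀ : N) (k : I)
    (hmono : ∀ i : N, ∀ A B : Finset I, A ⊆ B → v i A ≤ v i B)
    (hnonneg : ∀ (i : N) (A : Finset I), 0 ≤ v i A)
    (hdisj : ∀ i j : N, i ≠ j → Disjoint (X i) (X j))
    (hEF1 : EF1 v X)
    (hunenvied : ∀ j : N, v j (X j) ≥ v j (X i₀))
    (hfresh : ∀ j : N, k ∉ X j) :
    EF1 v (Function.update X i₀ (insert k (X i₀))) := by
  intro i j
  set Y := Function.update X i₀ (insert k (X i₀)) with hY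
  have hYi₀ : Y i₀ = insert k (X i₀) := Function.update_self _ _ _
  have hYne : ∀ a, a ≠ i₀ → Y a = X a := fun a ha => Function.update_of_ne ha _ _
  have hself : ∀ a, v a (X a) ≤ v a (Y a) := by
    intro a
    by_cases ha : a = i₀
    · subst ha; rw [hYi₀]; exact hmono a _ _ (Finset.subset_insert _ _)
    · rw [hYne a ha]
  by_cases hj : j = i₀
  · subst hj
    rename' j => i₀
    right
    refine ⟨k, by rw [hYi₀]; exact Finset.mem_insert_self _ _, ?_⟩
    rw [hYi₀, Finset.erase_insert (hfresh i₀)]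
    exact le_trans (hunenvied i) (hself i)
  · rw [hYne j hj]
    rcases hEF1 i j with h | ⟨a, ha, h⟩
    · exact Or.inl (le_trans h (hself i))
    · exact Or.inr ⟨a, ha, le_trans h (hself i)⟩
end

section
/- For every finite set N of agents, every finite set M of items, and every family of monotone valuations v_i : 2^M → ℝ≥0 (i ∈ N), there exists an allocation (X_i)_{i∈N} of all of M (pairwise disjoint bundles with ⋃_{i∈N} X_i = M) that is EF1: for every pair of agents i, j, either v_i(X_i) ≥ v_i(X_j) or there exists an item k ∈ X_j with v_i(X_i) ≥ v_i(X_j ∖ {k}). -/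
/-!  Common setup for fair division: agents `N`, items `I`, monotone valuations
`v : N → Finset I → ℝ`, allocations `(𝒳, μ)` given by a bundle family `X : N → Finset I`
and a bijection `σ : Equiv.Perm N` on indices (agent `i` receives bundle `X (σ i)`),
the assign-envy graph, and its auxiliary directed graph. -/

variable {N I : Type*}

/-! Envy-cycle elimination. Items are added one at a time to an EF1 allocation. Before an item
is added, the bundles are reassigned so that nobody is worse off and some bundle is envied by no
one: a welfare-maximal such reassignment works, since if every bundle were envied, following an
envier of each bundle closes a cycle, and rotating the bundles along it would raise welfare. The
new item goes to the holder of the unenvied bundle, and removing that item kills any envy it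
creates. -/

open Function in
theorem Function.periodicPts_nonempty {α : Type*} [Finite α] [Nonempty α] (f : α → α) :
    (periodicPts f).Nonempty := by
  set x := Classical.arbitrary α
  have hperiodic : ∀ {m n : ℕ}, m < n → f^[m] x = f^[n] x → f^[m] x ∈ periodicPts f :=
    fun {m n} hlt heq => mk_mem_periodicPts (Nat.sub_pos_of_lt hlt) <| by
      rw [IsPeriodicPt, IsFixedPt, ← iterate_add_apply, Nat.sub_add_cancel hlt.le, heq]
  obtain ⟨m, n, hne, heq⟩ := Finite.exists_ne_map_eq_of_infinite fun k : ℕ => f^[k] x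
  rcases hne.lt_or_gt with hlt | hlt
  · exact ⟨_, hperiodic hlt heq⟩
  · exact ⟨_, hperiodic hlt heq.symm⟩

open Function Equiv in
theorem exists_perm_pareto_improvement_of_forall_envied [Finite N] [Nonempty N] (u : N → N → ℝ)
    (henvied : ∀ j, ∃ i, u i i < u i j) :
    ∃ π : Perm N, (∀ i, u i i ≤ u i (π i)) ∧ ∃ i, u i i < u i (π i) := by
  classical
  choose f hf using henvied
  -- `g` runs along the cycles of `f`, so under `g.symm` the envier `f j` receives bundle `j`.
  let g : Perm N := Perm.ofSubtype ((bijOn_periodicPts f).equiv f)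
  have hg_of_mem : ∀ j ∈ periodicPts f, g j = f j := fun j hj => Perm.ofSubtype_apply_of_mem _ hj
  have hg : ∀ j, u (g j) (g j) ≤ u (g j) j := fun j => by
    by_cases hj : j ∈ periodicPts f
    · exact hg_of_mem j hj ▸ (hf j).le
    · rw [Perm.ofSubtype_apply_of_not_mem _ hj]
  obtain ⟨p, hp⟩ := periodicPts_nonempty f
  refine ⟨g.symm, fun i => by simpa using hg (g.symm i), g p, ?_⟩
  rw [Equiv.symm_apply_apply, hg_of_mem p hp]
  exact hf p

theorem exists_perm_improving_unenvied [Fintype N] [Nonempty N] (u : N → N → ℝ) :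
    ∃ σ : Equiv.Perm N, (∀ i, u i i ≤ u i (σ i)) ∧ ∃ i₀, ∀ i, u i (σ i₀) ≤ u i (σ i) := by
  classical
  obtain ⟨σ, hσ, hmax⟩ := Finset.exists_max_image
    (Finset.univ.filter fun σ : Equiv.Perm N => ∀ i, u i i ≤ u i (σ i))
    (fun σ => ∑ i, u i (σ i)) ⟨1, by simp⟩
  rw [Finset.mem_filter] at hσ
  refine ⟨σ, hσ.2, ?_⟩
  by_contra! henvied
  obtain ⟨π, hπ, i, hi⟩ :=
    exists_perm_pareto_improvement_of_forall_envied (fun i j => u i (σ j)) henvied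
  have hbetter : ∑ i, u i (σ i) < ∑ i, u i ((π.trans σ) i) :=
    Finset.sum_lt_sum (fun i _ => hπ i) ⟨i, Finset.mem_univ i, hi⟩
  exact hbetter.not_ge <| hmax (π.trans σ) <| by
    simpa using fun i => (hσ.2 i).trans (hπ i)

def IsAllocationOf (S : Finset I) (X : N → Finset I) : Prop :=
  (Pairwise fun i j => Disjoint (X i) (X j)) ∧ ∀ k, k ∈ S ↔ ∃ i, k ∈ X i

namespace IsAllocationOf

variable {S : Finset I} {X : N → Finset I}

theorem empty : IsAllocationOf (∅ : Finset I) (fun _ : N => ∅) :=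
  ⟨fun _ _ _ => disjoint_bot_left, by simp⟩

theorem comp_perm (hX : IsAllocationOf S X) (σ : Equiv.Perm N) : IsAllocationOf S (X ∘ σ) :=
  ⟨hX.1.comp_of_injective σ.injective, fun k => (hX.2 k).trans σ.surjective.exists⟩

theorem update_insert [DecidableEq N] [DecidableEq I] (hX : IsAllocationOf S X) {a : I}
    (ha : a ∉ S) (i₀ : N) :
    IsAllocationOf (insert a S) (Function.update X i₀ (insert a (X i₀))) := by
  have haX : ∀ i, a ∉ X i := fun i h => ha ((hX.2 a).2 ⟨i, h⟩)
  refine ⟨fun i j hij => ?_, fun k => ?_⟩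
  · simp only [Function.update_apply]
    split_ifs with hi hj hj
    · exact absurd (hi.trans hj.symm) hij
    · exact Finset.disjoint_insert_left.2 ⟨haX j, hX.1 (hi ▸ hij)⟩
    · exact Finset.disjoint_insert_right.2 ⟨haX i, hX.1 (hj ▸ hij)⟩
    · exact hX.1 hij
  · have hmem : ∀ i, k ∈ Function.update X i₀ (insert a (X i₀)) i ↔ (i = i₀ ∧ k = a) ∨ k ∈ X i :=
      fun i => by by_cases hi : i = i₀ <;> simp [hi]
    simp only [Finset.mem_insert, hX.2 k, hmem]
    grind

end IsAllocationOf

namespace EF1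

variable [DecidableEq I] {v : N → Finset I → ℝ} {X : N → Finset I}

theorem comp_perm (hX : EF1 v X) {σ : Equiv.Perm N} (hσ : ∀ i, v i (X i) ≤ v i (X (σ i))) :
    EF1 v (X ∘ σ) := fun i j =>
  (hX i (σ j)).imp (hσ i).trans' fun ⟨k, hk, hle⟩ => ⟨k, hk, (hσ i).trans' hle⟩

theorem update_insert [DecidableEq N] {a : I} {i₀ : N} (hmono : Monotone (v i₀)) (hX : EF1 v X)
    (ha : a ∉ X i₀) (hunenvied : ∀ i, v i (X i₀) ≤ v i (X i)) :
    EF1 v (Function.update X i₀ (insert a (X i₀))) := by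
  intro i j
  by_cases hj : j = i₀
  · subst hj
    by_cases hi : i = j
    · exact Or.inl (by rw [hi])
    · refine Or.inr ⟨a, by simp, ?_⟩
      simpa [hi, Finset.erase_insert ha] using hunenvied i
  · have hown : v i (X i) ≤ v i (Function.update X i₀ (insert a (X i₀)) i) := by
      by_cases hi : i = i₀
      · subst hi; simpa using hmono (Finset.subset_insert a (X i))
      · rw [Function.update_of_ne hi]
    rw [Function.update_of_ne hj]
    exact (hX i j).imp hown.trans' fun ⟨k, hk, hle⟩ => ⟨k, hk, hown.trans' hle⟩

end EF1

theorem exists_EF1_isAllocationOf [Fintype N] [Nonempty N] [DecidableEq I]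
    (v : N → Finset I → ℝ) (hmono : ∀ i, Monotone (v i)) (S : Finset I) :
    ∃ X : N → Finset I, IsAllocationOf S X ∧ EF1 v X := by
  classical
  induction S using Finset.induction_on with
  | empty => exact ⟨fun _ => ∅, .empty, fun _ _ => Or.inl le_rfl⟩
  | insert a S ha ih =>
    obtain ⟨X, hX, hEF1⟩ := ih
    obtain ⟨σ, hσ, i₀, hi₀⟩ := exists_perm_improving_unenvied fun i j => v i (X j)
    refine ⟨Function.update (X ∘ σ) i₀ (insert a (X (σ i₀))),
      (hX.comp_perm σ).update_insert ha i₀, (hEF1.comp_perm hσ).update_insert (hmono i₀) ?_ hi₀⟩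
    exact fun h => ha ((hX.2 a).2 ⟨σ i₀, h⟩)

theorem exists_EF1_allocation_general
    [Fintype N] [Fintype I] [DecidableEq I] [Nonempty N]
    (v : N → Finset I → ℝ)
    (hmono : ∀ i : N, ∀ A B : Finset I, A ⊆ B → v i A ≤ v i B) :
    ∃ X : N → Finset I,
      (∀ i j : N, i ≠ j → Disjoint (X i) (X j)) ∧
      (∀ k : I, ∃ i : N, k ∈ X i) ∧
      EF1 v X := by
  obtain ⟨X, ⟨hdisj, hcover⟩, hEF1⟩ :=
    exists_EF1_isAllocationOf v (fun i _ _ => hmono i _ _) Finset.univ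
  exact ⟨X, fun _ _ => @hdisj _ _, fun k => (hcover k).1 (Finset.mem_univ k), hEF1⟩

/-- For every finite set of agents, finite set of items, and monotone
nonnegative valuations, there exists an EF1 allocation of all items (pairwise disjoint
bundles whose union is the whole item set). -/
theorem exists_EF1_allocation
    [Fintype N] [Fintype I] [DecidableEq I] [Nonempty N]
    (v : N → Finset I → ℝ)
    (hmono : ∀ i : N, ∀ A B : Finset I, A ⊆ B → v i A ≤ v i B)
    (hnonneg : ∀ (i : N) (A : Finset I), 0 ≤ v i A) :
    ∃ X : N → Finset I,
      (∀ i j : N, i ≠ j → Disjoint (X i) (X j)) ∧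
      (∀ k : I, ∃ i : N, k ∈ X i) ∧
      EF1 v X :=
  exists_EF1_allocation_general v hmono
end

section
/- Suppose every agent i ∈ N has an additive valuation v_i(X) = Σ_{k∈X} v_{i,k} with nonnegative item values, and the items are ordered identically for all agents: v_{i,1} ≥ v_{i,2} ≥ … ≥ v_{i,m} for every i ∈ N. Then there exists an allocation (X_i)_{i∈N} of all of M that is EFX: for every pair of agents i, j and every item k ∈ X_j, it holds that v_i(X_i) ≥ v_i(X_j ∖ {k}). -/
/-!  Common setup for fair division: agents `N`, items `I`, monotone valuations
`v : N → Finset I → ℝ`, allocations `(𝒳, μ)` given by a bundle family `X : N → Finset I`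
and a bijection `σ : Equiv.Perm N` on indices (agent `i` receives bundle `X (σ i)`),
the assign-envy graph, and its auxiliary directed graph. -/

variable {N I : Type*}

/-!
Insert the items one at a time in decreasing order of value, keeping an EFX allocation of the
items inserted so far. Before inserting an item, rotate bundles along envy cycles: among the
reassignments of bundles that leave nobody worse off, one maximising total welfare has a bundle
that nobody envies, since otherwise an envy cycle could be rotated. The new item goes to that
bundle; being worth no more than any item already in it, removing any one item leaves a bundle
worth at most the old one, which nobody envied.
-/

open Function

namespace Function

variable {α : Type*}

theorem nonempty_periodicPts [Finite α] [Nonempty α] (f : α → α) :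
    (periodicPts f).Nonempty := by
  obtain ⟨x⟩ := ‹Nonempty α›
  obtain ⟨m, n, heq, hne⟩ : ∃ m n, f^[m] x = f^[n] x ∧ m ≠ n := by
    simpa [Injective] using not_injective_infinite_finite (f^[·] x)
  wlog hlt : m < n generalizing m n
  · exact this n m heq.symm hne.symm (by omega)
  refine ⟨f^[m] x, mk_mem_periodicPts (n := n - m) (by omega) ?_⟩
  rw [IsPeriodicPt, IsFixedPt, ← iterate_add_apply, Nat.sub_add_cancel hlt.le, heq]

/-- `f` permutes its periodic points, of which there is at least one. -/
theorem exists_perm_eq_self_or_eq_apply [Finite α] [Nonempty α] (f : α → α) :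
    ∃ e : Equiv.Perm α, (∀ x, e x = x ∨ e x = f x) ∧ ∃ x, e x = f x := by
  classical
  let e := Equiv.Perm.ofSubtype ((bijOn_periodicPts f).equiv f)
  have he : ∀ x ∈ periodicPts f, e x = f x := fun x hx => by
    simp [e, Equiv.Perm.ofSubtype_apply_of_mem _ hx, Set.BijOn.equiv]
  obtain ⟨x, hx⟩ := nonempty_periodicPts f
  refine ⟨e, fun y => ?_, x, he x hx⟩
  by_cases hy : y ∈ periodicPts f
  · exact .inr (he y hy)
  · exact .inl (Equiv.Perm.ofSubtype_apply_of_not_mem _ hy)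

end Function

/-- `W i j` is agent `i`'s value for bundle `j`, and `π` gives bundle `π i` to agent `i`. -/
theorem exists_perm_le_and_exists_unenvied {β : Type*} [AddCommMonoid β] [LinearOrder β]
    [IsOrderedCancelAddMonoid β] [Fintype N] [Nonempty N] (W : N → N → β) :
    ∃ π : Equiv.Perm N, (∀ i, W i i ≤ W i (π i)) ∧ ∃ i₀, ∀ j, W j (π i₀) ≤ W j (π j) := by
  classical
  obtain ⟨π, hπ, hmax⟩ := Finset.exists_max_image
    (Finset.univ.filter fun π : Equiv.Perm N => ∀ i, W i i ≤ W i (π i))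
    (fun π => ∑ i, W i (π i)) ⟨1, by simp⟩
  simp only [Finset.mem_filter, Finset.mem_univ, true_and] at hπ hmax
  refine ⟨π, hπ, ?_⟩
  by_contra! hcon
  choose envier henvier using hcon
  obtain ⟨e, he, x, hx⟩ := exists_perm_eq_self_or_eq_apply envier
  have hlt : ∀ y, e y = envier y → W (e y) (π (e y)) < W (e y) (π y) := fun y h => by
    rw [h]; exact henvier y
  have hle : ∀ y, W (e y) (π (e y)) ≤ W (e y) (π y) := fun y =>
    (he y).elim (fun h => by rw [h]) (fun h => (hlt y h).le)
  -- Rotating along `e` hands every bundle on the cycles of `e` to an agent envying it.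
  have hcomp : ∀ y, (π * e⁻¹) (e y) = π y := fun y => by simp
  have hsum : ∑ i, W i (π i) < ∑ i, W i ((π * e⁻¹) i) := by
    rw [← Equiv.sum_comp e (fun i => W i (π i)),
      ← Equiv.sum_comp e (fun i => W i ((π * e⁻¹) i))]
    simp only [hcomp]
    exact Finset.sum_lt_sum (fun y _ => hle y) ⟨x, Finset.mem_univ _, hlt x hx⟩
  refine (hmax _ fun i => ?_).not_gt hsum
  obtain ⟨y, rfl⟩ := e.surjective i
  rw [hcomp]
  exact (hπ (e y)).trans (hle y)

/-- Unlike in `aeAdj`, agent `i` receives the bundle `X i` itself. -/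
structure IsAllocation (S : Finset I) (X : N → Finset I) : Prop where
  pairwise_disjoint : Pairwise (Disjoint on X)
  mem_iff : ∀ k, k ∈ S ↔ ∃ i, k ∈ X i

def IsEFX [DecidableEq I] (v : N → Finset I → ℝ) (X : N → Finset I) : Prop :=
  ∀ i j, ∀ k ∈ X j, v i ((X j).erase k) ≤ v i (X i)

namespace IsAllocation

variable {S : Finset I} {X : N → Finset I}

theorem subset (h : IsAllocation S X) (i : N) : X i ⊆ S :=
  fun k hk => (h.mem_iff k).2 ⟨i, hk⟩

theorem comp_perm (h : IsAllocation S X) (π : Equiv.Perm N) : IsAllocation S (X ∘ π) :=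
  ⟨h.pairwise_disjoint.comp_of_injective π.injective,
    fun k => (h.mem_iff k).trans π.symm.exists_congr_left⟩

theorem update_insert [DecidableEq N] [DecidableEq I] (h : IsAllocation S X) {a : I}
    (ha : a ∉ S) (i₀ : N) : IsAllocation (insert a S) (update X i₀ (insert a (X i₀))) := by
  have hmem : ∀ i k, k ∈ update X i₀ (insert a (X i₀)) i ↔ i = i₀ ∧ k = a ∨ k ∈ X i := by
    intro i k
    rcases eq_or_ne i i₀ with rfl | hi
    · simp
    · simp [hi]
  refine ⟨fun i j hij => Finset.disjoint_left.2 fun k hki hkj => ?_, fun k => ?_⟩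
  · rw [hmem] at hki hkj
    rcases hki with ⟨rfl, rfl⟩ | hki <;> rcases hkj with ⟨rfl, hka⟩ | hkj
    · exact hij rfl
    · exact ha (h.subset j hkj)
    · exact ha (hka ▸ h.subset i hki)
    · exact Finset.disjoint_left.1 (h.pairwise_disjoint hij) hki hkj
  · simp only [Finset.mem_insert, h.mem_iff, hmem, exists_or, exists_and_right, exists_eq,
      true_and]

end IsAllocation

namespace IsEFX

variable [DecidableEq I] {X : N → Finset I}

theorem comp_perm {v : N → Finset I → ℝ} (h : IsEFX v X) {π : Equiv.Perm N}
    (hπ : ∀ i, v i (X i) ≤ v i (X (π i))) : IsEFX v (X ∘ π) :=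
  fun i j k hk => (h i (π j) k hk).trans (hπ i)

theorem update_insert [DecidableEq N] {val : N → I → ℝ}
    (h : IsEFX (fun i B => ∑ k ∈ B, val i k) X) {i₀ : N}
    (hunenvied : ∀ j, ∑ k ∈ X i₀, val j k ≤ ∑ k ∈ X j, val j k) {a : I} (ha : a ∉ X i₀)
    (hval : 0 ≤ val i₀ a) (hcheap : ∀ i, ∀ k ∈ X i₀, val i a ≤ val i k) :
    IsEFX (fun i B => ∑ k ∈ B, val i k) (update X i₀ (insert a (X i₀))) := by
  have hgrow : ∀ i, ∑ k ∈ X i, val i k ≤ ∑ k ∈ update X i₀ (insert a (X i₀)) i, val i k := by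
    intro i
    rcases eq_or_ne i i₀ with rfl | hi
    · rw [update_self, Finset.sum_insert ha]
      linarith
    · rw [update_of_ne hi]
  intro i j k hk
  refine le_trans ?_ (hgrow i)
  rcases eq_or_ne j i₀ with rfl | hj
  · rw [update_self] at hk ⊢
    have hak : val i a ≤ val i k :=
      (Finset.mem_insert.1 hk).elim (fun hka => hka ▸ le_rfl) (hcheap i k)
    have hsplit := Finset.sum_erase_add _ (fun k => val i k) hk
    rw [Finset.sum_insert ha] at hsplit
    linarith [hunenvied i]
  · rw [update_of_ne hj] at hk ⊢
    exact h i j k hk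

end IsEFX

theorem exists_isAllocation_isEFX_of_antitone [Fintype N] [Nonempty N] [LinearOrder I]
    (val : N → I → ℝ) (hnonneg : ∀ i k, 0 ≤ val i k) (hanti : ∀ i, Antitone (val i))
    (S : Finset I) :
    ∃ X : N → Finset I, IsAllocation S X ∧ IsEFX (fun i B => ∑ k ∈ B, val i k) X := by
  classical
  induction S using Finset.induction_on_max with
  | empty => exact ⟨fun _ => ∅, ⟨fun _ _ _ => disjoint_bot_left, by simp⟩, by simp [IsEFX]⟩
  | insert a S haS ih =>
    obtain ⟨X, hX, hEFX⟩ := ih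
    obtain ⟨π, hπ, i₀, hi₀⟩ :=
      exists_perm_le_and_exists_unenvied fun i j => ∑ k ∈ X j, val i k
    have ha : a ∉ S := fun h => (haS a h).false
    exact ⟨_, (hX.comp_perm π).update_insert ha i₀,
      (hEFX.comp_perm hπ).update_insert hi₀ (fun h => ha (hX.subset _ h)) (hnonneg i₀ a)
        fun i k hk => hanti i (haS k (hX.subset _ hk)).le⟩

/-- If every agent has an additive valuation with nonnegative item values
`val i k`, and the items `1, …, m` are ordered identically for all agents
(`v_{i,1} ≥ v_{i,2} ≥ … ≥ v_{i,m}` for every `i`), then there exists an EFX allocation of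
all items. -/
theorem exists_EFX_allocation_identical_order
    {m : ℕ} [Fintype N] [Nonempty N]
    (val : N → Fin m → ℝ)
    (hnonneg : ∀ (i : N) (k : Fin m), 0 ≤ val i k)
    (horder : ∀ i : N, ∀ k k' : Fin m, k ≤ k' → val i k' ≤ val i k) :
    ∃ X : N → Finset (Fin m),
      (∀ i j : N, i ≠ j → Disjoint (X i) (X j)) ∧
      (∀ k : Fin m, ∃ i : N, k ∈ X i) ∧
      ∀ i j : N, ∀ k ∈ X j,
        (∑ a ∈ (X j).erase k, val i a) ≤ ∑ a ∈ X i, val i a := by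
  obtain ⟨X, hX, hEFX⟩ :=
    exists_isAllocation_isEFX_of_antitone val hnonneg (fun i _ _ => horder i _ _) Finset.univ
  exact ⟨X, fun i j => @hX.pairwise_disjoint i j, fun k => (hX.mem_iff k).1 (Finset.mem_univ k),
    hEFX⟩
end

section
/- Let (𝒳, μ) be an allocation such that μ is a minimum-weight perfect matching in its own assign-envy graph (G, w) = G(𝒳, μ), and let X_{i₀} ∈ 𝒳 be a bundle whose only incident edge in G(𝒳, μ) is its matching edge (μ⁻¹(X_{i₀}), X_{i₀}). Let 𝒳' be obtained from 𝒳 by replacing X_{i₀} with X_{i₀} ∪ {k} for an item k not in any bundle, let (G', w') = G(𝒳', μ) be the new assign-envy graph (with μ viewed as the corresponding bijection), and let μ' = μ ∖ {(μ⁻¹(X_{i₀}), X_{i₀})}. Then the auxiliary directed graph G'_{μ'} contains no directed cycle. -/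
/-!
A directed cycle of `G'_{μ'}` alternates between agents and bundles, and every bundle on it is
left along an edge of `μ'`, so it is not `X' j₀` and equals the old bundle. An agent on the
cycle cannot reach it through its own matching edge, so it envies it in `𝒳'`, and hence
already in `𝒳`, since its own bundle only grew. Rotating the bundles along the cycle is then a
perfect matching of `G(𝒳, μ)` of strictly smaller weight than `μ`.
-/

/-!  Common setup for fair division: agents `N`, items `I`, monotone valuations
`v : N → Finset I → ℝ`, allocations `(𝒳, μ)` given by a bundle family `X : N → Finset I`
and a bijection `σ : Equiv.Perm N` on indices (agent `i` receives bundle `X (σ i)`),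
the assign-envy graph, and its auxiliary directed graph. -/

variable {N I : Type*}

/-- Auxiliary directed graph with respect to a *partial* matching: the matched agents form the
set `S ⊆ N`, agent `i ∈ S` being matched to bundle `σ i`. Non-matching edges go left-to-right,
matching edges are reversed. -/
def aeAuxPartial (adj : N → N → Prop) (σ : Equiv.Perm N) (S : Set N) :
    N ⊕ N → N ⊕ N → Prop
  | Sum.inl i, Sum.inr j => adj i j ∧ ¬(i ∈ S ∧ j = σ i)
  | Sum.inr j, Sum.inl i => i ∈ S ∧ j = σ i
  | _, _ => False

open Equiv

lemma List.getElem_append_take_one_eq_getElem_mod {α : Type*} {l : List α} (hl : l ≠ [])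
    (m : ℕ) (hm : m < (l ++ l.take 1).length) :
    (l ++ l.take 1)[m] = l[m % l.length]'(Nat.mod_lt _ (List.length_pos_iff.mpr hl)) := by
  have hpos := List.length_pos_iff.mpr hl
  rcases lt_or_ge m l.length with h | h
  · simp [List.getElem_append_left h, Nat.mod_eq_of_lt h]
  · have hm' : m = l.length := by simp at hm; omega
    subst hm'
    simp [List.getElem_append_right (le_refl _)]

lemma IsDiCycle.rel_formPerm {α : Type*} [DecidableEq α] {R : α → α → Prop} {C : List α}
    (hC : IsDiCycle R C) {x : α} (hx : x ∈ C) : R x (C.formPerm x) := by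
  obtain ⟨hne, hnd, hchain⟩ := hC
  obtain ⟨i, hi, rfl⟩ := List.getElem_of_mem hx
  have := List.isChain_iff_getElem.mp hchain i (by simp; omega)
  rw [List.getElem_append_take_one_eq_getElem_mod hne,
    List.getElem_append_take_one_eq_getElem_mod hne] at this
  rw [List.formPerm_apply_getElem _ hnd]
  simpa only [Nat.mod_eq_of_lt hi] using this

lemma Equiv.Perm.exists_apply_inl_eq_inl {α β : Type*} [Finite α] (f : Perm (α ⊕ β))
    (hf : ∀ a, (f (.inl a)).isLeft) : ∃ g : Perm α, ∀ a, f (.inl a) = .inl (g a) := by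
  let g₀ (a : α) : α := (f (.inl a)).getLeft (hf a)
  have hg₀ (a : α) : f (.inl a) = .inl (g₀ a) := (Sum.inl_getLeft _ _).symm
  have hinj : Function.Injective g₀ := fun a b hab =>
    Sum.inl_injective (f.injective ((hg₀ a).trans (hab ▸ (hg₀ b).symm)))
  exact ⟨.ofBijective g₀ (Finite.injective_iff_bijective.mp hinj), hg₀⟩

section aeAuxPartial

variable {adj : N → N → Prop} {σ : Perm N} {S : Set N}

lemma aeAuxPartial_inl_iff {i : N} {y : N ⊕ N} :
    aeAuxPartial adj σ S (.inl i) y ↔ ∃ j, y = .inr j ∧ adj i j ∧ ¬(i ∈ S ∧ j = σ i) := by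
  cases y <;> simp [aeAuxPartial]

lemma aeAuxPartial_inr_iff {j : N} {y : N ⊕ N} :
    aeAuxPartial adj σ S (.inr j) y ↔ ∃ i, y = .inl i ∧ i ∈ S ∧ j = σ i := by
  cases y <;> simp [aeAuxPartial]

namespace IsDiCycle

variable {C : List (N ⊕ N)}

lemma exists_inl_mem (hC : IsDiCycle (aeAuxPartial adj σ S) C) : ∃ i, .inl i ∈ C := by
  classical
  obtain ⟨x, hx⟩ := List.exists_mem_of_ne_nil C hC.1
  cases x with
  | inl i => exact ⟨i, hx⟩
  | inr j =>
    obtain ⟨i, hi, -⟩ := aeAuxPartial_inr_iff.mp (hC.rel_formPerm hx)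
    exact ⟨i, hi ▸ List.formPerm_apply_mem_of_mem hx⟩

lemma exists_formPerm_formPerm_inl_eq [DecidableEq N]
    (hC : IsDiCycle (aeAuxPartial adj σ S) C) {i : N} (hi : .inl i ∈ C) :
    ∃ i', C.formPerm (C.formPerm (.inl i)) = .inl i' ∧ i' ≠ i ∧ i' ∈ S ∧ adj i (σ i') := by
  obtain ⟨j, hj, hadj, hnot⟩ := aeAuxPartial_inl_iff.mp (hC.rel_formPerm hi)
  have hjC : .inr j ∈ C := hj ▸ List.formPerm_apply_mem_of_mem hi
  obtain ⟨i', hi', hS, rfl⟩ := aeAuxPartial_inr_iff.mp (hC.rel_formPerm hjC)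
  refine ⟨i', by rw [hj, hi'], ?_, hS, hadj⟩
  rintro rfl
  exact hnot ⟨hS, rfl⟩

theorem exists_perm_of_aeAuxPartial [Finite N] (hC : IsDiCycle (aeAuxPartial adj σ S) C) :
    ∃ c : Perm N, c ≠ 1 ∧ ∀ i, c i ≠ i → c i ∈ S ∧ adj i (σ (c i)) := by
  classical
  set π := C.formPerm
  have hfix (i : N) (hi : .inl i ∉ C) : π (.inl i) = .inl i := List.formPerm_apply_of_notMem hi
  have hleft (i : N) : ((π * π) (.inl i)).isLeft := by
    by_cases hi : .inl i ∈ C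
    · obtain ⟨i', he, -⟩ := hC.exists_formPerm_formPerm_inl_eq hi
      simp [Perm.mul_apply, π, he]
    · simp [Perm.mul_apply, hfix i hi]
  obtain ⟨c, hc⟩ := (π * π).exists_apply_inl_eq_inl hleft
  have hmove (i : N) (hi : .inl i ∈ C) : c i ≠ i ∧ c i ∈ S ∧ adj i (σ (c i)) := by
    obtain ⟨i', he, hne, hS, hadj⟩ := hC.exists_formPerm_formPerm_inl_eq hi
    obtain rfl : c i = i' := Sum.inl_injective ((hc i).symm.trans he)
    exact ⟨hne, hS, hadj⟩
  have hsupp (i : N) (hci : c i ≠ i) : .inl i ∈ C := by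
    by_contra hi
    exact hci (Sum.inl_injective (by rw [← hc, Perm.mul_apply, hfix i hi, hfix i hi]))
  obtain ⟨i₀, hi₀⟩ := hC.exists_inl_mem
  exact ⟨c, fun h => (hmove i₀ hi₀).1 (by simp [h]), fun i hci => (hmove i (hsupp i hci)).2⟩

end IsDiCycle

end aeAuxPartial

theorem exists_lighter_matching_of_envy_rotation [Fintype N] {v : N → Finset I → ℝ}
    {X : N → Finset I} {σ : Perm N} {c : Perm N} (hc : c ≠ 1)
    (henvy : ∀ i, c i ≠ i → v i (X (σ i)) < v i (X (σ (c i)))) :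
    ∃ ρ : Perm N, (∀ i, aeAdj v X σ i (ρ i)) ∧ ∑ i, aeW v X i (ρ i) < ∑ i, aeW v X i (σ i) := by
  refine ⟨c.trans σ, fun i => ?_, ?_⟩
  · by_cases hci : c i = i
    · exact .inl (by simp [hci])
    · exact .inr (henvy i hci)
  · obtain ⟨i₀, hi₀⟩ : ∃ i, c i ≠ i := by
      by_contra! h
      exact hc (Equiv.ext h)
    refine Finset.sum_lt_sum (fun i _ => ?_) ⟨i₀, Finset.mem_univ _, ?_⟩
    · by_cases hci : c i = i
      · simp [hci]
      · simpa [aeW] using (henvy i hci).le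
    · simpa [aeW] using henvy i₀ hi₀

theorem updated_assign_envy_graph_acyclic_general
    [Fintype N] [DecidableEq I] [DecidableEq N]
    (v : N → Finset I → ℝ) (X : N → Finset I) (σ : Equiv.Perm N) (j₀ : N) (k : I)
    (hmono : ∀ i : N, ∀ A B : Finset I, A ⊆ B → v i A ≤ v i B)
    (hσmin : ∀ ρ : Equiv.Perm N, (∀ i : N, aeAdj v X σ i (ρ i)) →
      ∑ i : N, aeW v X i (σ i) ≤ ∑ i : N, aeW v X i (ρ i)) :
    ∀ C : List (N ⊕ N),
      ¬ IsDiCycle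
        (aeAuxPartial (aeAdj v (Function.update X j₀ (insert k (X j₀))) σ) σ
          {i : N | σ i ≠ j₀}) C := by
  intro C hC
  set X' := Function.update X j₀ (insert k (X j₀))
  have hgrow (j : N) : X j ⊆ X' j := by
    rcases eq_or_ne j j₀ with rfl | hj
    · simp [X', Finset.subset_insert]
    · simp [X', hj]
  obtain ⟨c, hc1, hc⟩ := hC.exists_perm_of_aeAuxPartial
  have henvy (i : N) (hci : c i ≠ i) : v i (X (σ i)) < v i (X (σ (c i))) := by
    obtain ⟨hkept, hadj⟩ := hc i hci
    rcases hadj with hown | henvy'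
    · exact absurd (σ.injective hown) hci
    · have hX' : X' (σ (c i)) = X (σ (c i)) := Function.update_of_ne hkept _ _
      exact (hmono i _ _ (hgrow (σ i))).trans_lt (hX' ▸ henvy')
  obtain ⟨ρ, hρadj, hρlt⟩ := exists_lighter_matching_of_envy_rotation hc1 henvy
  exact (hσmin ρ hρadj).not_gt hρlt

/-- Let `(X, σ)` be an allocation such that `σ` is a minimum-weight perfect
matching in its own assign-envy graph, and let `X j₀` be a bundle whose only incident edge is
its matching edge. Add to `X j₀` an item `k` contained in no bundle, and remove the matching
edge of `X j₀` from the matching (`μ' = μ ∖ {(μ⁻¹(X j₀), X j₀)}`, matched agents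
`S = {i | σ i ≠ j₀}`). Then the auxiliary directed graph `G'_{μ'}` of the new assign-envy
graph contains no directed cycle. -/
theorem updated_assign_envy_graph_acyclic
    [Fintype N] [Fintype I] [DecidableEq I] [DecidableEq N]
    (v : N → Finset I → ℝ) (X : N → Finset I) (σ : Equiv.Perm N) (j₀ : N) (k : I)
    (hmono : ∀ i : N, ∀ A B : Finset I, A ⊆ B → v i A ≤ v i B)
    (hnonneg : ∀ (i : N) (A : Finset I), 0 ≤ v i A)
    (hdisj : ∀ i j : N, i ≠ j → Disjoint (X i) (X j))
    (hσmin : ∀ ρ : Equiv.Perm N, (∀ i : N, aeAdj v X σ i (ρ i)) →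
      ∑ i : N, aeW v X i (σ i) ≤ ∑ i : N, aeW v X i (ρ i))
    (honly : ∀ i : N, aeAdj v X σ i j₀ → j₀ = σ i)
    (hfresh : ∀ j : N, k ∉ X j) :
    ∀ C : List (N ⊕ N),
      ¬ IsDiCycle
        (aeAuxPartial (aeAdj v (Function.update X j₀ (insert k (X j₀))) σ) σ
          {i : N | σ i ≠ j₀}) C :=
  updated_assign_envy_graph_acyclic_general v X σ j₀ k hmono hσmin
end
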